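/- Let λ be a dominant coweight and J = {i ∈ S : ⟨λ, α_i⟩ = 0}. For x, x' ∈ W^J and y, y' ∈ W, the following are equivalent: (1) there exists u ∈ W_J with y'u ≤ y and xu⁻¹ ≤ x'; (2) there exists v ∈ W_J with y' ≤ yv and xv ≤ x'. -/

import Mathlib

/-!
The proof is combinatorics of words in the Coxeter group. The strong exchange condition, proved
with the sign representation of `W` on `W × {±1}`, shows that Bruhat order defined by subwords of
a reduced word agrees with the order generated by reflections `w < wt`, `ℓ w < ℓ (wt)`; hence it is
transitive and `u ≤ v` makes `u` a subword of *every* reduced word of `v`. The latter gives two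
rules for a simple reflection `s`: `u ≤ z` implies `us ≤ z` or `us ≤ zs`, and `u ≤ zs` implies
`u ≤ z` or `us ≤ z`. Peeling off the letters of a reduced word `ρ` in `J` one at a time, they turn
`y' (π ρ)⁻¹ ≤ y` into `y' ≤ y π ρ'` for a subword `ρ'` of `ρ`, and back. Finally, for `x ∈ W^J`
a reduced word of `x` followed by `ρ` is still reduced, so `x π ρ' ≤ x π ρ`, and transitivity
transfers the second condition.
-/

/-- The Bruhat order on a Coxeter group, defined via the subword property:
`u ≤ v` iff some reduced word for `v` contains a subword whose product is `u`. -/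
def bruhatLE {B W : Type*} [Group W] {M : CoxeterMatrix B} (cs : CoxeterSystem M W)
    (u v : W) : Prop :=
  ∃ l : List B, cs.IsReduced l ∧ cs.wordProd l = v ∧
    ∃ l' : List B, l'.Sublist l ∧ cs.wordProd l' = u

/-- `x` is a minimal length representative of its coset `x W_J`. -/
def isMinRep {B W : Type*} [Group W] {M : CoxeterMatrix B} (cs : CoxeterSystem M W)
    (J : Set B) (x : W) : Prop :=
  ∀ u ∈ Subgroup.closure (cs.simple '' J), cs.length x ≤ cs.length (x * u)

namespace CoxeterSystem

variable {B W : Type*} [Group W] {M : CoxeterMatrix B} (cs : CoxeterSystem M W)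

local prefix:100 "s" => cs.simple
local prefix:100 "π" => cs.wordProd
local prefix:100 "ℓ" => cs.length
local prefix:100 "ris" => cs.rightInvSeq

open scoped Classical

noncomputable def simpleSignPerm (i : B) : Equiv.Perm (W × ℤˣ) :=
  Function.Involutive.toPerm (fun q => (s i * q.1 * s i, (if q.1 = s i then -1 else 1) * q.2)) <| by
    rintro ⟨w, ε⟩
    have hconj : s i * (s i * w * s i) * s i = w := by simp [← mul_assoc]
    by_cases hw : w = s i
    · simp [hw]
    · have hw' : s i * w * s i ≠ s i := fun h =>
        hw (by simpa [hconj] using congrArg (s i * · * s i) h)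
      simp [hw, hw', hconj]

theorem simpleSignPerm_apply (i : B) (q : W × ℤˣ) :
    cs.simpleSignPerm i q = (s i * q.1 * s i, (if q.1 = s i then -1 else 1) * q.2) := rfl

theorem simpleSignPerm_mul_pow_apply (i i' : B) (k : ℕ) (w : W) (ε : ℤˣ) :
    ((cs.simpleSignPerm i * cs.simpleSignPerm i') ^ k) (w, ε) =
      ((s i * s i') ^ k * w * ((s i * s i') ^ k)⁻¹,
        (∏ n ∈ Finset.range (2 * k), if w = s i' * (s i * s i') ^ n then -1 else 1) * ε) := by
  set p := s i * s i' with hp_def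
  have hp : p⁻¹ * s i' = s i' * p := by simp [p, mul_assoc]
  clear_value p
  induction k generalizing w ε with
  | zero => simp
  | succ k ih =>
    have hconj (n : ℕ) : p * w * p⁻¹ = s i' * p ^ n ↔ w = s i' * p ^ (n + 2) := by
      have hpow : s i' * p ^ (n + 2) = p⁻¹ * (s i' * p ^ n) * p := by
        rw [← mul_assoc p⁻¹, hp]
        group
      rw [hpow]
      exact ⟨fun h => by rw [← h]; group, fun h => by rw [h]; group⟩
    have hstep : (cs.simpleSignPerm i * cs.simpleSignPerm i') (w, ε) =
        (p * w * p⁻¹, (if w = s i' * p then -1 else 1) * (if w = s i' then -1 else 1) * ε) := by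
      have hcond : s i' * w * s i' = s i ↔ w = s i' * p := by
        rw [hp_def]
        exact ⟨fun h => by simp [← h, ← mul_assoc], fun h => by simp [h, ← mul_assoc]⟩
      rw [Equiv.Perm.mul_apply, simpleSignPerm_apply, simpleSignPerm_apply]
      dsimp only
      rw [hcond, hp_def, mul_inv_rev, inv_simple, inv_simple]
      simp only [mul_assoc]
    rw [pow_succ, Equiv.Perm.mul_apply, hstep, ih]
    simp only [hconj, Prod.mk.injEq]
    constructor
    · group
    · rw [show 2 * (k + 1) = 2 * k + 1 + 1 by ring, Finset.prod_range_succ',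
        Finset.prod_range_succ']
      simp

theorem isLiftable_simpleSignPerm : M.IsLiftable cs.simpleSignPerm := by
  intro i i'
  ext ⟨w, ε⟩ : 1
  have hperiod (n : ℕ) : (s i * s i') ^ (M i i' + n) = (s i * s i') ^ n := by
    rw [pow_add, simple_mul_simple_pow, one_mul]
  rw [simpleSignPerm_mul_pow_apply, simple_mul_simple_pow, two_mul, Finset.prod_range_add]
  simp only [hperiod, Int.units_mul_self, one_mul, inv_one, mul_one, Equiv.Perm.one_apply]

noncomputable def signRep : W →* Equiv.Perm (W × ℤˣ) :=
  cs.lift ⟨cs.simpleSignPerm, cs.isLiftable_simpleSignPerm⟩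

theorem signRep_simple (i : B) : cs.signRep (s i) = cs.simpleSignPerm i :=
  cs.lift_apply_simple _ i

/-- `reflSign (π ω) t = -1` iff `t` occurs an odd number of times in `ris ω`. -/
noncomputable def reflSign (w t : W) : ℤˣ := (cs.signRep w (t, 1)).2

theorem signRep_apply (w t : W) (ε : ℤˣ) :
    cs.signRep w (t, ε) = (w * t * w⁻¹, cs.reflSign w t * ε) := by
  induction w using cs.simple_induction_left generalizing t ε with
  | one => simp [reflSign]
  | mul_simple_left w i ih =>
    have hsign :
        cs.reflSign (s i * w) t = (if w * t * w⁻¹ = s i then -1 else 1) * cs.reflSign w t := by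
      rw [reflSign, map_mul, Equiv.Perm.mul_apply, ih, signRep_simple, simpleSignPerm_apply,
        mul_one]
    rw [hsign, map_mul, Equiv.Perm.mul_apply, ih, signRep_simple, simpleSignPerm_apply]
    ext <;> simp [mul_assoc]

theorem reflSign_mul (w w' t : W) :
    cs.reflSign (w * w') t = cs.reflSign w (w' * t * w'⁻¹) * cs.reflSign w' t := by
  have := cs.signRep_apply (w * w') t 1
  rw [map_mul, Equiv.Perm.mul_apply, signRep_apply, signRep_apply, Prod.mk.injEq] at this
  simpa using this.2.symm

theorem reflSign_simple (i : B) (t : W) :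
    cs.reflSign (s i) t = if t = s i then -1 else 1 := by
  simp [reflSign, signRep_simple, simpleSignPerm_apply]

theorem reflSign_one (t : W) : cs.reflSign 1 t = 1 := by
  simp [reflSign]

theorem reflSign_self {t : W} (ht : cs.IsReflection t) : cs.reflSign t t = -1 := by
  obtain ⟨v, i, rfl⟩ := ht
  have hconj : v⁻¹ * (v * s i * v⁻¹) * v⁻¹⁻¹ = s i := by group
  have hcancel := cs.reflSign_mul v v⁻¹ (v * s i * v⁻¹)
  rw [mul_inv_cancel, reflSign_one, hconj] at hcancel
  rw [reflSign_mul, reflSign_mul, reflSign_simple, hconj, if_pos rfl, mul_inv_cancel_right,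
    mul_right_comm, ← hcancel, one_mul]

theorem mem_rightInvSeq_of_reflSign_ne_one {ω : List B} {t : W}
    (h : cs.reflSign (π ω) t ≠ 1) : t ∈ ris ω := by
  induction ω with
  | nil => exact absurd (cs.reflSign_one t) (by simpa using h)
  | cons i ω ih =>
    rw [wordProd_cons, reflSign_mul, reflSign_simple] at h
    by_cases ht : π ω * t * (π ω)⁻¹ = s i
    · rw [rightInvSeq, List.mem_cons]
      left
      rw [← ht]
      group
    · rw [if_neg ht, one_mul] at h
      exact List.mem_cons_of_mem _ (ih h)

theorem reflSign_eq_neg_one_of_isRightInversion {w t : W} (h : cs.IsRightInversion w t) :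
    cs.reflSign w t = -1 := by
  obtain ⟨ht, hlt⟩ := h
  have hwt : cs.reflSign (w * t) t = 1 := by
    by_contra hne
    obtain ⟨ζ, hζ, hζw⟩ := cs.exists_isReduced (w * t)
    rw [hζw] at hne
    have := cs.isRightInversion_of_mem_rightInvSeq hζ (cs.mem_rightInvSeq_of_reflSign_ne_one hne)
    rw [← hζw, IsRightInversion, mul_assoc, ht.mul_self, mul_one] at this
    omega
  calc cs.reflSign w t = cs.reflSign (w * t * t) t := by rw [mul_assoc, ht.mul_self, mul_one]
    _ = -1 := by rw [reflSign_mul, mul_inv_cancel_right, hwt, reflSign_self cs ht, one_mul]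

theorem mem_rightInvSeq_of_isRightInversion {ω : List B} {t : W}
    (h : cs.IsRightInversion (π ω) t) : t ∈ ris ω :=
  cs.mem_rightInvSeq_of_reflSign_ne_one <| by
    rw [reflSign_eq_neg_one_of_isRightInversion cs h]
    decide

theorem exists_eraseIdx_of_isRightInversion {ω : List B} {t : W}
    (h : cs.IsRightInversion (π ω) t) : ∃ j < ω.length, π ω * t = π (ω.eraseIdx j) := by
  obtain ⟨j, hj, rfl⟩ := List.mem_iff_getElem.mp (cs.mem_rightInvSeq_of_isRightInversion h)
  rw [length_rightInvSeq] at hj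
  refine ⟨j, hj, ?_⟩
  rw [← wordProd_mul_getD_rightInvSeq, List.getD_eq_getElem]

theorem exists_isReduced_sublist (ω : List B) :
    ∃ ω' : List B, ω'.Sublist ω ∧ cs.IsReduced ω' ∧ π ω' = π ω := by
  induction ω using List.reverseRecOn with
  | nil => exact ⟨[], .slnil, by simp [IsReduced], rfl⟩
  | append_singleton ω i ih =>
    obtain ⟨ω', hsub, hred, hπ⟩ := ih
    have hπi : π (ω ++ [i]) = π ω' * s i := by rw [wordProd_append, wordProd_singleton, hπ]
    rcases cs.length_mul_simple (π ω') i with hlong | hshort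
    · refine ⟨ω' ++ [i], hsub.append_right [i], ?_,
        by rw [hπi, wordProd_append, wordProd_singleton]⟩
      rw [IsReduced, wordProd_append, wordProd_singleton, hlong, hred, List.length_append,
        List.length_singleton]
    · obtain ⟨j, hj, hexch⟩ :=
        cs.exists_eraseIdx_of_isRightInversion (ω := ω') ⟨cs.isReflection_simple i, by omega⟩
      refine ⟨ω'.eraseIdx j, ((List.eraseIdx_sublist _ _).trans hsub).trans
        (List.sublist_append_left _ _), ?_, by rw [hπi, hexch]⟩
      have := List.length_eraseIdx_add_one hj
      rw [IsReduced, ← hexch]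
      rw [IsReduced] at hred
      omega

def BruhatStep (a b : W) : Prop := ∃ t, cs.IsReflection t ∧ b = a * t ∧ ℓ a < ℓ b

abbrev BruhatChain : W → W → Prop := Relation.ReflTransGen cs.BruhatStep

theorem bruhatStep_simple_mul {a b : W} {i : B} (hb : b = s i * a) (h : ℓ a < ℓ b) :
    cs.BruhatStep a b :=
  ⟨a⁻¹ * s i * a, by simpa using (cs.isReflection_simple i).conj a⁻¹, by rw [hb]; group, h⟩

theorem bruhatChain_simple_mul_of_bruhatStep {c h : W} {j : B} (hstep : cs.BruhatStep c h)
    (hh : ℓ (s j * h) < ℓ h) : cs.BruhatChain (s j * c) h := by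
  obtain ⟨t, ht, rfl, hlt⟩ := hstep
  obtain ⟨ζ, hζ, hζh⟩ := cs.exists_isReduced (s j * (c * t))
  have hπ : π (j :: ζ) = c * t := by rw [wordProd_cons, ← hζh, simple_mul_simple_cancel_left]
  have hct : c * t * t = c := by rw [mul_assoc, ht.mul_self, mul_one]
  obtain ⟨k, hk, hexch⟩ := cs.exists_eraseIdx_of_isRightInversion (ω := j :: ζ)
    ⟨ht, by rwa [hπ, hct]⟩
  rw [hπ, hct] at hexch
  rcases k with _ | k
  · have hc : c = π ζ := by simpa using hexch
    have : s j * c = c * t := by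
      calc s j * c = s j * (s j * (c * t)) := by rw [hζh, ← hc]
        _ = c * t := simple_mul_simple_cancel_left _ _
    rw [this]
  · rw [List.eraseIdx_cons_succ, wordProd_cons] at hexch
    have hsc : s j * c = π (ζ.eraseIdx k) := by rw [hexch, simple_mul_simple_cancel_left]
    have hlen : ℓ (s j * c) < ℓ (s j * (c * t)) := by
      have := List.length_eraseIdx_add_one (l := ζ) (i := k) (by simp at hk; omega)
      rw [hsc, hζh, hζ]
      linarith [cs.length_wordProd_le (ζ.eraseIdx k)]
    exact (Relation.ReflTransGen.single ⟨t, ht, (mul_assoc _ _ _).symm, hlen⟩).tail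
      (cs.bruhatStep_simple_mul (simple_mul_simple_cancel_left _ _).symm hh)

theorem bruhatChain_simple_mul {a b : W} {j : B} (hab : cs.BruhatChain a b)
    (ha : ℓ a < ℓ (s j * a)) (hb : ℓ b < ℓ (s j * b)) : cs.BruhatChain (s j * a) (s j * b) := by
  revert ha
  induction hab using Relation.ReflTransGen.head_induction_on with
  | refl => exact fun _ => .refl
  | @head a h hstep htail ih =>
    intro ha
    by_cases hh : ℓ h < ℓ (s j * h)
    · obtain ⟨t, ht, rfl, hlt⟩ := hstep
      refine .head ⟨t, ht, (mul_assoc _ _ _).symm, ?_⟩ (ih hh)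
      rcases cs.length_simple_mul a j with h1 | h1 <;>
        rcases cs.length_simple_mul (a * t) j with h2 | h2 <;> omega
    · have hh' : ℓ (s j * h) < ℓ h :=
        lt_of_le_of_ne (not_lt.mp hh) (cs.length_simple_mul_ne h j)
      exact (cs.bruhatChain_simple_mul_of_bruhatStep hstep hh').trans
        (htail.tail (cs.bruhatStep_simple_mul rfl hb))

theorem bruhatChain_wordProd_of_sublist {l l' : List B} (hl : cs.IsReduced l)
    (h : l'.Sublist l) : cs.BruhatChain (π l') (π l) := by
  induction l generalizing l' with
  | nil => rw [List.sublist_nil.mp h]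
  | cons j l ih =>
    have hl₀ : cs.IsReduced l := by simpa using hl.drop 1
    have hup : ℓ (π l) < ℓ (s j * π l) := by
      rw [← wordProd_cons, hl, hl₀, List.length_cons]
      omega
    have htop := cs.bruhatStep_simple_mul rfl hup
    rw [wordProd_cons]
    rcases List.sublist_cons_iff.mp h with h | ⟨r, rfl, hr⟩
    · exact (ih hl₀ h).tail htop
    · rw [wordProd_cons]
      by_cases hr' : ℓ (π r) < ℓ (s j * π r)
      · exact cs.bruhatChain_simple_mul (ih hl₀ hr) hr' hup
      · have hdown : ℓ (s j * π r) < ℓ (π r) :=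
          lt_of_le_of_ne (not_lt.mp hr') (cs.length_simple_mul_ne _ j)
        exact (Relation.ReflTransGen.head
          (cs.bruhatStep_simple_mul (simple_mul_simple_cancel_left _ _).symm hdown)
          (ih hl₀ hr)).tail htop

theorem exists_sublist_of_bruhatChain {u v : W} (h : cs.BruhatChain u v) {l : List B}
    (hl : cs.IsReduced l) (hv : π l = v) : ∃ l' : List B, l'.Sublist l ∧ π l' = u := by
  induction h generalizing l with
  | refl => exact ⟨l, .refl l, hv⟩
  | tail _ hstep ih =>
    obtain ⟨t, ht, rfl, hlt⟩ := hstep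
    obtain ⟨j, -, hexch⟩ := cs.exists_eraseIdx_of_isRightInversion (ω := l)
      ⟨ht, by rw [hv, mul_assoc, ht.mul_self, mul_one]; exact hlt⟩
    obtain ⟨ζ, hsub, hζ, hπζ⟩ := cs.exists_isReduced_sublist (l.eraseIdx j)
    obtain ⟨l', hl', rfl⟩ := ih hζ (by rw [hπζ, ← hexch, hv, mul_assoc, ht.mul_self, mul_one])
    exact ⟨l', hl'.trans (hsub.trans (List.eraseIdx_sublist l j)), rfl⟩

theorem bruhatLE_iff_bruhatChain {u v : W} : bruhatLE cs u v ↔ cs.BruhatChain u v := by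
  constructor
  · rintro ⟨l, hl, rfl, l', hsub, rfl⟩
    exact cs.bruhatChain_wordProd_of_sublist hl hsub
  · intro h
    obtain ⟨l, hl, rfl⟩ := cs.exists_isReduced v
    obtain ⟨l', hsub, rfl⟩ := cs.exists_sublist_of_bruhatChain h hl rfl
    exact ⟨l, hl, rfl, l', hsub, rfl⟩

theorem bruhatLE_trans {u v w : W} (huv : bruhatLE cs u v) (hvw : bruhatLE cs v w) :
    bruhatLE cs u w := by
  rw [bruhatLE_iff_bruhatChain] at *
  exact huv.trans hvw

theorem exists_sublist_of_bruhatLE {u v : W} (h : bruhatLE cs u v) {l : List B}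
    (hl : cs.IsReduced l) (hv : π l = v) : ∃ l' : List B, l'.Sublist l ∧ π l' = u :=
  cs.exists_sublist_of_bruhatChain ((bruhatLE_iff_bruhatChain cs).mp h) hl hv

theorem bruhatLE_wordProd_of_sublist {l l' : List B} (hl : cs.IsReduced l) (h : l'.Sublist l) :
    bruhatLE cs (π l') (π l) :=
  ⟨l, hl, rfl, l', h, rfl⟩

theorem isReduced_concat {l : List B} {j : B} (hl : cs.IsReduced l)
    (h : ℓ (π l) < ℓ (π l * s j)) : cs.IsReduced (l ++ [j]) := by
  rw [IsReduced, wordProd_append, wordProd_singleton, List.length_append, List.length_singleton,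
    ← hl]
  rcases cs.length_mul_simple (π l) j with h' | h' <;> omega

theorem bruhatLE_mul_simple_or {u z : W} (j : B) (h : bruhatLE cs u z) :
    bruhatLE cs (u * s j) z ∨ bruhatLE cs (u * s j) (z * s j) := by
  rcases cs.length_mul_simple z j with hz | hz
  · right
    obtain ⟨l, hl, rfl, l', hsub, rfl⟩ := h
    simpa only [wordProd_append, wordProd_singleton] using
      cs.bruhatLE_wordProd_of_sublist (cs.isReduced_concat hl (by omega)) (hsub.append_right [j])
  · left
    obtain ⟨ζ, hζ, hζz⟩ := cs.exists_isReduced (z * s j)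
    have hπ : π (ζ ++ [j]) = z := by
      rw [wordProd_append, wordProd_singleton, ← hζz, simple_mul_simple_cancel_right]
    have hζj : cs.IsReduced (ζ ++ [j]) :=
      cs.isReduced_concat hζ (by rw [← hζz, simple_mul_simple_cancel_right]; omega)
    obtain ⟨l', hsub, rfl⟩ := cs.exists_sublist_of_bruhatLE h hζj hπ
    rw [← hπ]
    obtain ⟨l₁, l₂, rfl, h₁, h₂⟩ := List.sublist_append_iff.mp hsub
    rcases List.sublist_singleton.mp h₂ with rfl | rfl
    · simpa only [wordProd_append, wordProd_singleton, wordProd_nil, mul_one] using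
        cs.bruhatLE_wordProd_of_sublist hζj (h₁.append_right [j])
    · simpa only [wordProd_append, wordProd_singleton, simple_mul_simple_cancel_right] using
        cs.bruhatLE_wordProd_of_sublist hζj (h₁.trans (List.sublist_append_left ζ [j]))

theorem bruhatLE_or_mul_simple_of_le_mul_simple {u z : W} (j : B) (h : bruhatLE cs u (z * s j)) :
    bruhatLE cs u z ∨ bruhatLE cs (u * s j) z := by
  rcases cs.length_mul_simple z j with hz | hz
  · obtain ⟨ζ, hζ, rfl⟩ := cs.exists_isReduced z
    have hζj := cs.isReduced_concat (j := j) hζ (by omega)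
    obtain ⟨l', hsub, rfl⟩ :=
      cs.exists_sublist_of_bruhatLE h hζj (by rw [wordProd_append, wordProd_singleton])
    obtain ⟨l₁, l₂, rfl, h₁, h₂⟩ := List.sublist_append_iff.mp hsub
    rcases List.sublist_singleton.mp h₂ with rfl | rfl
    · left
      simpa only [wordProd_append, wordProd_nil, mul_one] using
        cs.bruhatLE_wordProd_of_sublist hζ h₁
    · right
      simpa only [wordProd_append, wordProd_singleton, simple_mul_simple_cancel_right] using
        cs.bruhatLE_wordProd_of_sublist hζ h₁
  · left
    obtain ⟨l, hl, hlz, l', hsub, rfl⟩ := h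
    have hπ : π (l ++ [j]) = z := by
      rw [wordProd_append, wordProd_singleton, hlz, simple_mul_simple_cancel_right]
    rw [← hπ]
    exact cs.bruhatLE_wordProd_of_sublist
      (cs.isReduced_concat hl (by rw [hlz, simple_mul_simple_cancel_right]; omega))
      (hsub.trans (List.sublist_append_left l [j]))

theorem exists_sublist_le_mul_wordProd (ρ : List B) {a b : W}
    (h : bruhatLE cs (a * (π ρ)⁻¹) b) : ∃ ρ' : List B, ρ'.Sublist ρ ∧ bruhatLE cs a (b * π ρ') := by
  induction ρ using List.reverseRecOn generalizing a with
  | nil => exact ⟨[], .slnil, by simpa using h⟩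
  | append_singleton ρ j ih =>
    rw [wordProd_append, wordProd_singleton, mul_inv_rev, inv_simple, ← mul_assoc] at h
    obtain ⟨ρ', hsub, hle⟩ := ih h
    rcases cs.bruhatLE_mul_simple_or j hle with hle' | hle' <;>
      rw [simple_mul_simple_cancel_right] at hle'
    · exact ⟨ρ', hsub.trans (List.sublist_append_left _ _), hle'⟩
    · exact ⟨ρ' ++ [j], hsub.append_right [j],
        by rwa [wordProd_append, wordProd_singleton, ← mul_assoc]⟩

theorem exists_sublist_mul_inv_le (ρ : List B) {a b : W} (h : bruhatLE cs a (b * π ρ)) :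
    ∃ ρ' : List B, ρ'.Sublist ρ ∧ bruhatLE cs (a * (π ρ')⁻¹) b := by
  induction ρ using List.reverseRecOn generalizing a with
  | nil => exact ⟨[], .slnil, by simpa using h⟩
  | append_singleton ρ j ih =>
    rw [wordProd_append, wordProd_singleton, ← mul_assoc] at h
    rcases cs.bruhatLE_or_mul_simple_of_le_mul_simple j h with hle | hle
    · obtain ⟨ρ', hsub, hle'⟩ := ih hle
      exact ⟨ρ', hsub.trans (List.sublist_append_left _ _), hle'⟩
    · obtain ⟨ρ', hsub, hle'⟩ := ih hle
      exact ⟨ρ' ++ [j], hsub.append_right [j],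
        by rwa [wordProd_append, wordProd_singleton, mul_inv_rev, inv_simple, ← mul_assoc]⟩

theorem wordProd_mem_closure {J : Set B} {l : List B} (hl : ∀ b ∈ l, b ∈ J) :
    π l ∈ Subgroup.closure (cs.simple '' J) :=
  Subgroup.list_prod_mem _ fun _ hw => by
    obtain ⟨b, hb, rfl⟩ := List.mem_map.mp hw
    exact Subgroup.subset_closure ⟨b, hl b hb, rfl⟩

theorem exists_isReduced_of_mem_closure {J : Set B} {w : W}
    (hw : w ∈ Subgroup.closure (cs.simple '' J)) :
    ∃ ρ : List B, cs.IsReduced ρ ∧ (∀ b ∈ ρ, b ∈ J) ∧ π ρ = w := by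
  have hword : ∃ l : List B, (∀ b ∈ l, b ∈ J) ∧ π l = w := by
    induction hw using Subgroup.closure_induction with
    | mem _ hx =>
      obtain ⟨i, hi, rfl⟩ := hx
      exact ⟨[i], by simpa using hi, wordProd_singleton _ _⟩
    | one => exact ⟨[], by simp, wordProd_nil _⟩
    | mul _ _ _ _ h₁ h₂ =>
      obtain ⟨l₁, hl₁, rfl⟩ := h₁
      obtain ⟨l₂, hl₂, rfl⟩ := h₂
      exact ⟨l₁ ++ l₂, fun b hb => (List.mem_append.mp hb).elim (hl₁ b) (hl₂ b),
        wordProd_append _ _ _⟩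
    | inv _ _ h =>
      obtain ⟨l, hl, rfl⟩ := h
      exact ⟨l.reverse, fun b hb => hl b (List.mem_reverse.mp hb), wordProd_reverse _ _⟩
  obtain ⟨l, hlJ, rfl⟩ := hword
  obtain ⟨ρ, hsub, hρ, hπ⟩ := cs.exists_isReduced_sublist l
  exact ⟨ρ, hρ, fun b hb => hlJ b (hsub.subset hb), hπ⟩

/-- Deletion shortens `ξ ++ ρ` to a reduced `ξ' ++ ρ'`; minimality of `x` forces `ξ' = ξ`, and
then `π ρ' = π ρ` leaves no room for `ρ'` to be shorter than `ρ`. -/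
theorem isReduced_append_of_isMinRep {J : Set B} {x : W} (hx : isMinRep cs J x)
    {ξ ρ : List B} (hξ : cs.IsReduced ξ) (hξx : π ξ = x) (hρ : cs.IsReduced ρ)
    (hρJ : ∀ b ∈ ρ, b ∈ J) : cs.IsReduced (ξ ++ ρ) := by
  obtain ⟨ω, hsub, hω, hπω⟩ := cs.exists_isReduced_sublist (ξ ++ ρ)
  obtain ⟨ξ', ρ', rfl, hξ', hρ'⟩ := List.sublist_append_iff.mp hsub
  rw [wordProd_append, wordProd_append] at hπω
  have hmin := hx (π ρ * (π ρ')⁻¹) (mul_mem (cs.wordProd_mem_closure hρJ)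
    (inv_mem (cs.wordProd_mem_closure fun b hb => hρJ b (hρ'.subset hb))))
  rw [← hξx, ← mul_assoc, ← hπω, mul_inv_cancel_right, hξ] at hmin
  obtain rfl : ξ' = ξ := hξ'.eq_of_length_le (hmin.trans (cs.length_wordProd_le ξ'))
  have hρeq : π ρ' = π ρ := mul_left_cancel hπω
  have hρlen := cs.length_wordProd_le ρ'
  rw [hρeq, hρ] at hρlen
  rw [IsReduced, wordProd_append, ← hρeq, ← wordProd_append, hω, List.length_append,
    List.length_append]
  have := hρ'.length_le
  have := hξ.eq
  omega

theorem bruhatLE_mul_wordProd_of_sublist {J : Set B} {x : W} (hx : isMinRep cs J x)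
    {ρ ρ' : List B} (hρ : cs.IsReduced ρ) (hρJ : ∀ b ∈ ρ, b ∈ J) (h : ρ'.Sublist ρ) :
    bruhatLE cs (x * π ρ') (x * π ρ) := by
  obtain ⟨ξ, hξ, rfl⟩ := cs.exists_isReduced x
  simpa only [wordProd_append] using cs.bruhatLE_wordProd_of_sublist
    (cs.isReduced_append_of_isMinRep hx hξ rfl hρ hρJ) (h.append_left ξ)

end CoxeterSystem

theorem exists_u_iff_exists_v_general {B W : Type*} [Group W] {M : CoxeterMatrix B}
    (cs : CoxeterSystem M W) (J : Set B) (x x' y y' : W)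
    (hx : isMinRep cs J x) :
    (∃ u ∈ Subgroup.closure (cs.simple '' J),
        bruhatLE cs (y' * u) y ∧ bruhatLE cs (x * u⁻¹) x') ↔
    (∃ v ∈ Subgroup.closure (cs.simple '' J),
        bruhatLE cs y' (y * v) ∧ bruhatLE cs (x * v) x') := by
  constructor
  · rintro ⟨u, hu, hyu, hxu⟩
    obtain ⟨ρ, hρ, hρJ, hρu⟩ := cs.exists_isReduced_of_mem_closure (inv_mem hu)
    obtain ⟨ρ', hsub, hy⟩ := cs.exists_sublist_le_mul_wordProd ρ (by rwa [hρu, inv_inv])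
    refine ⟨cs.wordProd ρ', cs.wordProd_mem_closure fun b hb => hρJ b (hsub.subset hb), hy, ?_⟩
    exact cs.bruhatLE_trans (hρu ▸ cs.bruhatLE_mul_wordProd_of_sublist hx hρ hρJ hsub) hxu
  · rintro ⟨v, hv, hyv, hxv⟩
    obtain ⟨ρ, hρ, hρJ, rfl⟩ := cs.exists_isReduced_of_mem_closure hv
    obtain ⟨ρ', hsub, hy⟩ := cs.exists_sublist_mul_inv_le ρ hyv
    refine ⟨(cs.wordProd ρ')⁻¹,
      inv_mem (cs.wordProd_mem_closure fun b hb => hρJ b (hsub.subset hb)), hy, ?_⟩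
    rw [inv_inv]
    exact cs.bruhatLE_trans (cs.bruhatLE_mul_wordProd_of_sublist hx hρ hρJ hsub) hxv

/-- For `x, x' ∈ W^J` and `y, y' ∈ W` in a finite Weyl group, the existence of
`u ∈ W_J` with `y'u ≤ y` and `xu⁻¹ ≤ x'` is equivalent to the existence of
`v ∈ W_J` with `y' ≤ yv` and `xv ≤ x'`. -/
theorem exists_u_iff_exists_v {B W : Type*} [Group W] [Finite W] {M : CoxeterMatrix B}
    (cs : CoxeterSystem M W) (J : Set B) (x x' y y' : W)
    (hx : isMinRep cs J x) (hx' : isMinRep cs J x') :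
    (∃ u ∈ Subgroup.closure (cs.simple '' J),
        bruhatLE cs (y' * u) y ∧ bruhatLE cs (x * u⁻¹) x') ↔
    (∃ v ∈ Subgroup.closure (cs.simple '' J),
        bruhatLE cs y' (y * v) ∧ bruhatLE cs (x * v) x') :=
  exists_u_iff_exists_v_general cs J x x' y y' hx
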